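/- arXiv:2401.08113 — 5 statements merged into one kernel-verified Lean document; each statement's English description precedes it below -/
import Mathlib

section
/- Let d ≥ 1 be an integer, let z ∈ ℂ^d with z ≠ 0, and fix 1 ≤ j ≤ d. Then the function t ↦ (2πt)^{−d} (conj(z_j)/t) exp(−‖z‖²/(2t)) is integrable on (0, ∞), and ∫₀^∞ (2πt)^{−d} (conj(z_j)/t) exp(−‖z‖²/(2t)) dt = ((d−1)!/π^d) · conj(z_j)/‖z‖^{2d}. In particular, the regularized propagator coefficients K^j_{ε,L}(z) converge to the Bochner–Martinelli kernel coefficient ((d−1)!/π^d) · conj(z_j)/‖z‖^{2d} as ε → 0⁺ and L → +∞. -/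
open MeasureTheory Filter

/-- The integrand `t ↦ (2πt)^{-d} (conj z_j / t) exp(-‖z‖²/(2t))` of the
Schwinger representation of the Bochner–Martinelli kernel coefficient. -/
noncomputable def bmIntegrand (d : ℕ) (j : Fin d) (z : Fin d → ℂ) (t : ℝ) : ℂ :=
  ((((2 * Real.pi * t) ^ d)⁻¹ : ℝ) : ℂ) * ((starRingEnd ℂ) (z j) / (t : ℂ)) *
    Complex.exp (-((∑ i, Complex.normSq (z i) : ℝ) : ℂ) / (2 * (t : ℂ)))

/-- The Bochner–Martinelli kernel coefficient `((d-1)!/π^d) ⬝ conj z_j / ‖z‖^{2d}`. -/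
noncomputable def bmKernel (d : ℕ) (j : Fin d) (z : Fin d → ℂ) : ℂ :=
  ((((d - 1).factorial : ℝ) / Real.pi ^ d : ℝ) : ℂ) * (starRingEnd ℂ) (z j) /
    ((∑ i, Complex.normSq (z i) : ℝ) : ℂ) ^ d

/-- The coefficient function of the regularized Bochner–Martinelli propagator,
`K^j_{ε,L}(z) = ∫_ε^L (2πt)^{-d} (conj z_j / t) exp(-‖z‖²/(2t)) dt`. -/
noncomputable def bmReg (d : ℕ) (j : Fin d) (ε L : ℝ) (z : Fin d → ℂ) : ℂ :=
  ∫ t in ε..L, bmIntegrand d j z t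

/-!
Substituting `t = 1/x` turns `∫₀^∞ t^(-d-1) exp(-b/t) dt` into the Gamma integral
`∫₀^∞ x^(d-1) exp(-b x) dx = Γ(d) / b^d`; with `b = ‖z‖²/2` and the prefactor `(2π)^(-d)` this is
`(d-1)! / (π ‖z‖²)^d`. The truncated integrals over `(ε, L]` converge to the integral over `(0, ∞)`
by dominated convergence, since these intervals exhaust `(0, ∞)`.
-/

open Set Real Topology

theorem intervalIntegral_tendsto_integral_Ioi_nhdsGT_atTop {E : Type*} [NormedAddCommGroup E]
    [NormedSpace ℝ E] {f : ℝ → E} {a : ℝ} (hf : IntegrableOn f (Ioi a)) :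
    Tendsto (fun p : ℝ × ℝ => ∫ t in p.1..p.2, f t) (𝓝[>] a ×ˢ atTop)
      (𝓝 (∫ t in Ioi a, f t)) := by
  have hcover : AECover (volume.restrict (Ioi a)) (𝓝[>] a ×ˢ atTop)
      (fun p : ℝ × ℝ => Ioi p.1 ∩ Iic p.2) :=
    (aecover_Ioi_of_Ioi (tendsto_fst.mono_right nhdsWithin_le_nhds)).inter
      ((aecover_Iic tendsto_snd).mono Measure.restrict_le_self)
  refine (hcover.integral_tendsto_of_countably_generated hf).congr' ?_
  have hlt : ∀ᶠ p : ℝ × ℝ in 𝓝[>] a ×ˢ atTop, a < p.1 ∧ p.1 ≤ p.2 := by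
    filter_upwards [prod_mem_prod (Ioo_mem_nhdsGT (lt_add_one a)) (Ici_mem_atTop (a + 1))]
      with p ⟨⟨hap, hpa⟩, hp⟩
    exact ⟨hap, hpa.le.trans hp⟩
  filter_upwards [hlt] with p ⟨hap, hp⟩
  rw [Measure.restrict_restrict (measurableSet_Ioi.inter measurableSet_Iic), Ioi_inter_Iic,
    inter_eq_left.mpr (Ioc_subset_Ioi_self.trans (Ioi_subset_Ioi hap.le)),
    intervalIntegral.integral_of_le hp]

-- The integrand produced by `integral_comp_rpow_Ioi` with `p = -1`.
theorem inv_rpow_neg_sub_one_mul_exp_neg_div {s b x : ℝ} (hx : 0 < x) :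
    (|(-1 : ℝ)| * x ^ ((-1 : ℝ) - 1)) • ((x ^ (-1 : ℝ)) ^ (-s - 1) * exp (-b / x ^ (-1 : ℝ)))
      = x ^ (s - 1) * exp (-(b * x)) := by
  rw [rpow_neg_one, inv_rpow hx.le, ← rpow_neg hx.le, smul_eq_mul, ← mul_assoc, abs_neg, abs_one,
    one_mul, ← rpow_add hx, div_inv_eq_mul, neg_mul]
  ring_nf

theorem integrableOn_rpow_neg_sub_one_mul_exp_neg_div {s b : ℝ} (hs : 0 < s) (hb : 0 < b) :
    IntegrableOn (fun t : ℝ => t ^ (-s - 1) * exp (-b / t)) (Ioi 0) := by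
  rw [← integrableOn_Ioi_comp_rpow_iff _ (neg_ne_zero.mpr one_ne_zero)]
  refine (integrableOn_congr_fun (fun x hx => inv_rpow_neg_sub_one_mul_exp_neg_div hx)
    measurableSet_Ioi).mpr ?_
  have h := integrableOn_rpow_mul_exp_neg_mul_rpow (by linarith : -1 < s - 1) one_pos hb
  simp only [rpow_one, neg_mul] at h
  exact h

theorem integral_rpow_neg_sub_one_mul_exp_neg_div {s b : ℝ} (hs : 0 < s) (hb : 0 < b) :
    ∫ t in Ioi 0, t ^ (-s - 1) * exp (-b / t) = (1 / b) ^ s * Gamma s := by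
  rw [← integral_comp_rpow_Ioi _ (neg_ne_zero.mpr one_ne_zero),
    setIntegral_congr_fun measurableSet_Ioi (fun x hx => inv_rpow_neg_sub_one_mul_exp_neg_div hx),
    integral_rpow_mul_exp_neg_mul_Ioi hs hb]

theorem sum_normSq_pos {ι : Type*} [Fintype ι] {z : ι → ℂ} (hz : z ≠ 0) :
    0 < ∑ i, Complex.normSq (z i) := by
  obtain ⟨i, hi⟩ := Function.ne_iff.mp hz
  exact Finset.sum_pos' (fun i _ => Complex.normSq_nonneg _)
    ⟨i, Finset.mem_univ i, Complex.normSq_pos.mpr hi⟩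

theorem bmIntegrand_eq {d : ℕ} (j : Fin d) (z : Fin d → ℂ) {t : ℝ} (ht : 0 < t) :
    bmIntegrand d j z t = starRingEnd ℂ (z j) * (((2 * π) ^ d)⁻¹ *
      (t ^ (-(d : ℝ) - 1) * exp (-((∑ i, Complex.normSq (z i)) / 2) / t)) : ℝ) := by
  rw [rpow_sub ht, rpow_neg ht.le, rpow_natCast, rpow_one, bmIntegrand, mul_pow]
  push_cast
  field_simp

theorem integrableOn_bmIntegrand {d : ℕ} (j : Fin d) {z : Fin d → ℂ} (hz : z ≠ 0) :
    IntegrableOn (bmIntegrand d j z) (Ioi 0) := by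
  have hint := ((integrableOn_rpow_neg_sub_one_mul_exp_neg_div (Nat.cast_pos.mpr j.pos)
    (half_pos (sum_normSq_pos hz))).const_mul ((2 * π) ^ d)⁻¹).ofReal (𝕜 := ℂ)
  refine IntegrableOn.congr_fun ?_ (fun t ht => (bmIntegrand_eq j z ht).symm) measurableSet_Ioi
  exact hint.const_mul _

theorem integral_bmIntegrand {d : ℕ} (j : Fin d) {z : Fin d → ℂ} (hz : z ≠ 0) :
    ∫ t in Ioi 0, bmIntegrand d j z t = bmKernel d j z := by
  have ha := sum_normSq_pos hz
  obtain ⟨m, rfl⟩ : ∃ m, d = m + 1 := Nat.exists_eq_add_one.mpr j.pos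
  rw [setIntegral_congr_fun measurableSet_Ioi (fun t ht => bmIntegrand_eq j z ht),
    integral_const_mul, integral_complex_ofReal, integral_const_mul,
    integral_rpow_neg_sub_one_mul_exp_neg_div (Nat.cast_pos.mpr j.pos) (half_pos ha),
    rpow_natCast, Nat.cast_succ, Gamma_nat_eq_factorial, bmKernel, Nat.add_sub_cancel]
  push_cast
  field_simp
  ring

theorem bm_kernel_integral_general (d : ℕ) (z : Fin d → ℂ) (hz : z ≠ 0) (j : Fin d) :
    IntegrableOn (bmIntegrand d j z) (Set.Ioi 0) volume ∧
    (∫ t in Set.Ioi (0 : ℝ), bmIntegrand d j z t) = bmKernel d j z ∧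
    Tendsto (fun p : ℝ × ℝ => bmReg d j p.1 p.2 z)
      ((nhdsWithin 0 (Set.Ioi 0)) ×ˢ atTop) (nhds (bmKernel d j z)) := by
  have hint := integrableOn_bmIntegrand j hz
  refine ⟨hint, integral_bmIntegrand j hz, ?_⟩
  rw [← integral_bmIntegrand j hz]
  exact intervalIntegral_tendsto_integral_Ioi_nhdsGT_atTop hint

/-- For `z ≠ 0`, the integrand is integrable on `(0,∞)`, its integral is the
Bochner–Martinelli kernel coefficient, and the regularized propagator coefficients
`K^j_{ε,L}(z)` converge to it as `ε → 0⁺` and `L → +∞`. -/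
theorem bm_kernel_integral (d : ℕ) (hd : 1 ≤ d) (z : Fin d → ℂ) (hz : z ≠ 0) (j : Fin d) :
    IntegrableOn (bmIntegrand d j z) (Set.Ioi 0) volume ∧
    (∫ t in Set.Ioi (0 : ℝ), bmIntegrand d j z t) = bmKernel d j z ∧
    Tendsto (fun p : ℝ × ℝ => bmReg d j p.1 p.2 z)
      ((nhdsWithin 0 (Set.Ioi 0)) ×ˢ atTop) (nhds (bmKernel d j z)) :=
  bm_kernel_integral_general d z hz j
end

section
/- (Weighted matrix-tree theorem.) Let Γ be a connected finite directed graph without self-loops with vertex set {1,…,N}, and let t = (t_e)_{e∈Γ₁} be positive weights. Then det M_Γ(t) = (Σ_{T ∈ Tree(Γ)} Π_{e ∉ T} t_e) / (Π_{e ∈ Γ₁} t_e). -/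
/-!
Write `M_Γ(t) = B · diag(t)⁻¹ · Bᵀ`, where `B` is the incidence matrix with the row of the last
vertex removed, and expand the determinant by Cauchy–Binet over the `(N - 1)`-element edge sets
`S`: the term of `S` is `det(B_S)² / ∏_{e ∈ S} t_e`. The incidence matrix of a loopless digraph is
totally unimodular, so `det(B_S)² ∈ {0, 1}`, and `det(B_S) ≠ 0` exactly when `S` connects all
vertices: a left kernel vector of `B_S`, extended by `0` at the removed vertex, is a potential that
is constant along the edges of `S`, and conversely the indicator of a component missing the
removed vertex is such a kernel vector.
-/

open Finset

/-- Reachability between vertices generated by (the endpoints of) the edges in `S`: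
the equivalence relation generated by the pairs `(h e, t e)`, `e ∈ S`. -/
def Reach {V E : Type*} (hm tm : E → V) (S : Set E) : V → V → Prop :=
  Relation.EqvGen fun a b => ∃ e ∈ S, hm e = a ∧ tm e = b

/-- Incidence matrix entry: `1` if `i` is the head of `e`, `-1` if it is the tail,
`0` otherwise. -/
def inc {V E : Type*} [DecidableEq V] (hm tm : E → V) (e : E) (i : V) : ℝ :=
  if hm e = i then 1 else if tm e = i then -1 else 0

/-- Reduced weighted Laplacian `M_Γ(t)_{ij} = ∑_e ρ^e_i ρ^e_j / t_e`,
indexed by the first `n` of the `n + 1` vertices. -/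
noncomputable def lap {n : ℕ} {E : Type*} [Fintype E] (hm tm : E → Fin (n + 1))
    (w : E → ℝ) : Matrix (Fin n) (Fin n) ℝ :=
  Matrix.of fun i j => ∑ e, inc hm tm e i.castSucc * inc hm tm e j.castSucc / w e

/-- `T` is a spanning tree: it has `N - 1` edges and connects all vertices. -/
def IsSpanningTree {n : ℕ} {E : Type*} [Fintype E] (hm tm : E → Fin (n + 1))
    (T : Finset E) : Prop :=
  T.card = n ∧ ∀ a b : Fin (n + 1), Reach hm tm (↑T) a b

open Matrix

namespace Finset

variable {E : Type*} {m : ℕ} (s : Finset E) (h : #s = m)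

noncomputable def finEmbOfCardEq : Fin m ↪ E :=
  (s.equivFinOfCardEq h).symm.toEmbedding.trans (Function.Embedding.subtype _)

theorem finEmbOfCardEq_mem (i : Fin m) : s.finEmbOfCardEq h i ∈ s :=
  Subtype.coe_prop _

@[simp]
theorem range_finEmbOfCardEq : Set.range (s.finEmbOfCardEq h) = s := by
  ext e
  refine ⟨?_, fun he => ⟨s.equivFinOfCardEq h ⟨e, he⟩, by simp [finEmbOfCardEq]⟩⟩
  rintro ⟨i, rfl⟩
  exact s.finEmbOfCardEq_mem h i

theorem image_finEmbOfCardEq [DecidableEq E] : univ.image (s.finEmbOfCardEq h) = s := by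
  simp [← Finset.coe_inj]

theorem prod_finEmbOfCardEq {M : Type*} [CommMonoid M] (f : E → M) :
    ∏ i, f (s.finEmbOfCardEq h i) = ∏ e ∈ s, f e := by
  rw [← s.prod_coe_sort]
  exact (s.equivFinOfCardEq h).symm.prod_comp (fun e : s => f e)

end Finset

namespace Matrix

variable {R : Type*} [CommRing R] {m : ℕ} {E : Type*} [Fintype E]
  (B : Matrix (Fin m) E R) (C : Matrix E (Fin m) R)

theorem det_mul_eq_sum_prod_mul_det_submatrix :
    (B * C).det = ∑ r : Fin m → E, (∏ i, B i (r i)) * (C.submatrix r id).det := by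
  have hrows : B * C = of fun i => ∑ e, B i e • C e := by
    ext i j
    simp [mul_apply]
  rw [hrows]
  refine (detRowAlternating.toMultilinearMap.map_sum (fun i e => B i e • C e)).trans ?_
  refine sum_congr rfl fun r _ => ?_
  exact (detRowAlternating.toMultilinearMap.map_smul_univ
    (fun i => B i (r i)) (fun i => C (r i))).trans (smul_eq_mul _ _)

theorem sum_prod_mul_det_submatrix_image_eq [DecidableEq E] {φ : Fin m → E} (hφ : φ.Injective) :
    ∑ r ∈ univ.filter (fun r : Fin m → E => r.Injective) with univ.image r = univ.image φ,
      (∏ i, B i (r i)) * (C.submatrix r id).det =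
      (B.submatrix id φ).det * (C.submatrix φ id).det := by
  have hfiber : (univ.filter (fun r : Fin m → E => r.Injective)).filter
      (fun r => univ.image r = univ.image φ) =
      univ.image fun σ : Equiv.Perm (Fin m) => φ ∘ σ := by
    ext r
    simp only [mem_filter, mem_univ, true_and, mem_image]
    constructor
    · rintro ⟨hr, himage⟩
      have hrange : Set.range r = Set.range φ := by
        simpa [← Finset.coe_inj] using himage
      refine ⟨(Equiv.ofInjective r hr).trans
        ((Equiv.setCongr hrange).trans (Equiv.ofInjective φ hφ).symm), funext fun k => ?_⟩
      simp [Equiv.apply_ofInjective_symm]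
    · rintro ⟨σ, rfl⟩
      refine ⟨hφ.comp σ.injective, ?_⟩
      rw [← image_image, image_univ_equiv]
  have hinj : Function.Injective fun σ : Equiv.Perm (Fin m) => φ ∘ σ := fun σ τ hστ =>
    Equiv.ext fun k => hφ (congrFun hστ k)
  rw [hfiber, sum_image hinj.injOn]
  have hpermute (σ : Equiv.Perm (Fin m)) :
      (C.submatrix (φ ∘ σ) id).det = Equiv.Perm.sign σ * (C.submatrix φ id).det :=
    det_permute σ (C.submatrix φ id)
  simp only [hpermute, ← det_transpose (B.submatrix id φ), det_apply', sum_mul]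
  refine sum_congr rfl fun σ _ => ?_
  simp only [Function.comp_apply, transpose_apply, submatrix_apply, id]
  ring

/-- The Cauchy–Binet formula. -/
theorem det_mul_eq_sum_det_submatrix_mul_det_submatrix [DecidableEq E] :
    (B * C).det = ∑ s : Finset E, if h : #s = m then
      (B.submatrix id (s.finEmbOfCardEq h)).det * (C.submatrix (s.finEmbOfCardEq h) id).det
      else 0 := by
  have hnoninj (r : Fin m → E) (hr : ¬ r.Injective) : (C.submatrix r id).det = 0 := by
    obtain ⟨i, j, hij, hne⟩ := Function.not_injective_iff.mp hr
    exact det_zero_of_row_eq hne (by ext; simp [hij])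
  rw [det_mul_eq_sum_prod_mul_det_submatrix, ← sum_filter_of_ne fun r _ h =>
      not_imp_comm.mp (hnoninj r) (right_ne_zero_of_mul h),
    ← sum_fiberwise _ fun r => univ.image r]
  refine sum_congr rfl fun s _ => ?_
  split_ifs with h
  · rw [← sum_prod_mul_det_submatrix_image_eq B C (s.finEmbOfCardEq h).injective,
      s.image_finEmbOfCardEq h]
  · refine sum_eq_zero fun r hr => absurd ?_ h
    simp only [mem_filter, mem_univ, true_and] at hr
    rw [← hr.2, card_image_of_injective _ hr.1, card_univ, Fintype.card_fin]

end Matrix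

theorem Matrix.det_submatrix_diagonal_mul_transpose {R : Type*} [CommRing R] {m E : Type*}
    [Fintype m] [DecidableEq m] [Fintype E] [DecidableEq E]
    (B : Matrix m E R) (d : E → R) (φ : m → E) :
    ((diagonal d * Bᵀ).submatrix φ id).det = (∏ i, d (φ i)) * (B.submatrix id φ).det := by
  have hfactor : (diagonal d * Bᵀ).submatrix φ id = diagonal (d ∘ φ) * (B.submatrix id φ)ᵀ := by
    ext i j
    simp [diagonal_mul]
  rw [hfactor, det_mul, det_diagonal, det_transpose]
  rfl

section Incidence

variable {V E : Type*} [DecidableEq V] (hm tm : E → V)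

theorem inc_eq_sub_of_ne {e : E} (he : hm e ≠ tm e) (v : V) :
    inc hm tm e v = (if hm e = v then 1 else 0) - (if tm e = v then 1 else 0) := by
  unfold inc
  split_ifs <;> simp_all

theorem inc_eq_zero {e : E} {v : V} (hh : hm e ≠ v) (ht : tm e ≠ v) : inc hm tm e v = 0 := by
  simp [inc, hh, ht]

theorem inc_mem_range_signType_cast (e : E) (v : V) :
    inc hm tm e v ∈ Set.range (SignType.cast : SignType → ℝ) := by
  unfold inc
  split_ifs
  exacts [⟨1, by simp⟩, ⟨-1, by simp⟩, ⟨0, by simp⟩]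

theorem sum_mul_inc {e : E} (he : hm e ≠ tm e) (s : Finset V) (x : V → ℝ) :
    ∑ v ∈ s, x v * inc hm tm e v =
      (if hm e ∈ s then x (hm e) else 0) - (if tm e ∈ s then x (tm e) else 0) := by
  simp [inc_eq_sub_of_ne hm tm he, mul_sub, sum_sub_distrib]

def incMatrix : Matrix V E ℝ :=
  Matrix.of fun v e => inc hm tm e v

theorem isTotallyUnimodular_incMatrix (hloop : ∀ e, hm e ≠ tm e) :
    (incMatrix hm tm).IsTotallyUnimodular := by
  intro k
  induction k with
  | zero => exact fun _ _ _ _ => ⟨1, by simp⟩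
  | succ k ih =>
    intro f g hf hg
    set M := (incMatrix hm tm).submatrix f g
    by_cases hends : ∀ j, hm (g j) ∈ Set.range f ∧ tm (g j) ∈ Set.range f
    · refine ⟨0, ?_⟩
      rw [SignType.coe_zero, eq_comm, ← exists_vecMul_eq_zero_iff]
      refine ⟨1, one_ne_zero, funext fun j => ?_⟩
      have hcol : (1 ᵥ* M) j = ∑ v ∈ univ.image f, (1 : V → ℝ) v * inc hm tm (g j) v := by
        rw [sum_image hf.injOn]
        simp [M, incMatrix, vecMul, dotProduct]
      rw [hcol, sum_mul_inc hm tm (hloop (g j))]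
      have hh : ∃ i, f i = hm (g j) := (hends j).1
      have ht : ∃ i, f i = tm (g j) := (hends j).2
      simp [hh, ht]
    · push Not at hends
      obtain ⟨j, hj⟩ := hends
      obtain ⟨i₀, hi₀⟩ : ∃ i₀, ∀ i ≠ i₀, M i j = 0 := by
        by_cases hex : ∃ i₀, f i₀ = hm (g j) ∨ f i₀ = tm (g j)
        · obtain ⟨i₀, h₀⟩ := hex
          -- else `f i` and `f i₀` would be the two endpoints of `g j`, both in the range of `f`
          refine ⟨i₀, fun i hi => inc_eq_zero hm tm ?_ ?_⟩ <;> grind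
        · push Not at hex
          exact ⟨0, fun i _ => inc_eq_zero hm tm (hex i).1.symm (hex i).2.symm⟩
      rw [det_succ_column M j, Fintype.sum_eq_single i₀ fun i hi => by simp [hi₀ i hi]]
      change _ ∈ MonoidHom.mrange SignType.castHom.toMonoidHom
      refine mul_mem (mul_mem (pow_mem ?_ _) (inc_mem_range_signType_cast ..)) ?_
      · exact ⟨-1, by simp⟩
      · exact ih _ _ (hf.comp Fin.succAbove_right_injective) (hg.comp Fin.succAbove_right_injective)

end Incidence

theorem apply_eq_apply_of_reach {V E α : Type*} {hm tm : E → V} {S : Set E} {f : V → α}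
    (hf : ∀ e ∈ S, f (hm e) = f (tm e)) {a b : V} (h : Reach hm tm S a b) : f a = f b := by
  induction h with
  | rel _ _ h =>
    obtain ⟨e, he, rfl, rfl⟩ := h
    exact hf e he
  | refl => rfl
  | symm _ _ _ ih => exact ih.symm
  | trans _ _ _ _ _ ih₁ ih₂ => exact ih₁.trans ih₂

section Reduced

variable {n : ℕ} {E : Type*} (hm tm : E → Fin (n + 1))

def reducedIncMatrix : Matrix (Fin n) E ℝ :=
  (incMatrix hm tm).submatrix Fin.castSucc id

theorem vecMul_reducedIncMatrix (hloop : ∀ e, hm e ≠ tm e) {f : Fin (n + 1) → ℝ}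
    (hf : f (Fin.last n) = 0) :
    (f ∘ Fin.castSucc) ᵥ* reducedIncMatrix hm tm = fun e => f (hm e) - f (tm e) := by
  ext e
  have hsum := sum_mul_inc hm tm (hloop e) univ f
  rw [Fin.sum_univ_castSucc, hf, zero_mul, add_zero] at hsum
  simpa [vecMul, dotProduct, reducedIncMatrix, incMatrix] using hsum

theorem det_reducedIncMatrix_submatrix_ne_zero_iff (hloop : ∀ e, hm e ≠ tm e)
    (φ : Fin n → E) :
    ((reducedIncMatrix hm tm).submatrix id φ).det ≠ 0 ↔
      ∀ a b, Reach hm tm (Set.range φ) a b := by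
  have hvecMul {f : Fin (n + 1) → ℝ} (hf : f (Fin.last n) = 0) (k : Fin n) :
      ((f ∘ Fin.castSucc) ᵥ* (reducedIncMatrix hm tm).submatrix id φ) k =
        f (hm (φ k)) - f (tm (φ k)) :=
    congrFun (vecMul_reducedIncMatrix hm tm hloop hf) (φ k)
  have hedge (k : Fin n) : Reach hm tm (Set.range φ) (hm (φ k)) (tm (φ k)) :=
    .rel _ _ ⟨φ k, ⟨k, rfl⟩, rfl, rfl⟩
  rw [Ne, ← exists_vecMul_eq_zero_iff]
  constructor
  · intro hdet
    by_contra hdisconn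
    obtain ⟨a, ha⟩ : ∃ a, ¬ Reach hm tm (Set.range φ) a (Fin.last n) := by
      by_contra! h
      exact hdisconn fun a b => .trans _ _ _ (h a) (.symm _ _ (h b))
    classical
    let f : Fin (n + 1) → ℝ := fun u => if Reach hm tm (Set.range φ) u a then 1 else 0
    have hlast : f (Fin.last n) = 0 := if_neg fun h => ha (.symm _ _ h)
    refine hdet ⟨f ∘ Fin.castSucc, ?_, funext fun k => ?_⟩
    · obtain ⟨a', rfl⟩ := Fin.exists_castSucc_eq.mpr fun h => ha (h ▸ .refl _)
      intro h0
      have hne : ¬ Reach hm tm (Set.range φ) a'.castSucc a'.castSucc := by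
        simpa [f] using congrFun h0 a'
      exact hne (.refl _)
    · rw [hvecMul hlast, Pi.zero_apply, sub_eq_zero]
      exact if_congr ⟨.trans _ _ _ (.symm _ _ (hedge k)), .trans _ _ _ (hedge k)⟩ rfl rfl
  · rintro hconn ⟨x, hx, hx0⟩
    refine hx (funext fun i => ?_)
    have hconst : ∀ e ∈ Set.range φ, Fin.snoc (α := fun _ => ℝ) x 0 (hm e) =
        Fin.snoc (α := fun _ => ℝ) x 0 (tm e) := by
      rintro _ ⟨k, rfl⟩
      have hk := hvecMul (f := Fin.snoc x 0) (Fin.snoc_last ..) k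
      rwa [Fin.snoc_comp_castSucc, hx0, Pi.zero_apply, eq_comm, sub_eq_zero] at hk
    simpa using apply_eq_apply_of_reach hconst (hconn i.castSucc (Fin.last n))

theorem sq_det_reducedIncMatrix_submatrix_of_reach (hloop : ∀ e, hm e ≠ tm e) (φ : Fin n → E)
    (hconn : ∀ a b, Reach hm tm (Set.range φ) a b) :
    ((reducedIncMatrix hm tm).submatrix id φ).det ^ 2 = 1 := by
  have hne := (det_reducedIncMatrix_submatrix_ne_zero_iff hm tm hloop φ).mpr hconn
  obtain ⟨σ, hσ⟩ : ((reducedIncMatrix hm tm).submatrix id φ).det ∈ Set.range SignType.cast :=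
    ((isTotallyUnimodular_iff _).mp
    ((isTotallyUnimodular_incMatrix hm tm hloop).submatrix Fin.castSucc id)) n id φ
  rw [← hσ] at hne ⊢
  cases σ <;> simp at hne ⊢

end Reduced

theorem lap_eq_mul {n : ℕ} {E : Type*} [Fintype E] [DecidableEq E] (hm tm : E → Fin (n + 1))
    (w : E → ℝ) :
    lap hm tm w = reducedIncMatrix hm tm * (diagonal w⁻¹ * (reducedIncMatrix hm tm)ᵀ) := by
  ext i j
  rw [mul_apply]
  simp only [diagonal_mul, lap, reducedIncMatrix, incMatrix, of_apply, transpose_apply,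
    submatrix_apply, id, Pi.inv_apply]
  exact sum_congr rfl fun e _ => by ring

open scoped Classical in
theorem weighted_matrix_tree_general {n : ℕ} {E : Type*} [Fintype E]
    (hm tm : E → Fin (n + 1))
    (hloop : ∀ e, hm e ≠ tm e)
    (w : E → ℝ) (hw : ∀ e, 0 < w e) :
    (lap hm tm w).det =
      (∑ T ∈ Finset.univ.filter fun T : Finset E => IsSpanningTree hm tm T,
        ∏ e ∈ Tᶜ, w e) / ∏ e, w e := by
  have hw0 (e : E) : w e ≠ 0 := (hw e).ne'
  rw [lap_eq_mul, det_mul_eq_sum_det_submatrix_mul_det_submatrix,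
    eq_div_iff (prod_ne_zero_iff.mpr fun e _ => hw0 e), sum_mul, sum_filter]
  refine sum_congr rfl fun s _ => ?_
  simp only [det_submatrix_diagonal_mul_transpose]
  by_cases hs : IsSpanningTree hm tm s
  · obtain ⟨hcard, hconn⟩ := hs
    have hsq := sq_det_reducedIncMatrix_submatrix_of_reach hm tm hloop (s.finEmbOfCardEq hcard)
      (by simpa using hconn)
    have hprod : ∏ e ∈ s, w e ≠ 0 := prod_ne_zero_iff.mpr fun e _ => hw0 e
    rw [dif_pos hcard, if_pos ⟨hcard, hconn⟩, prod_finEmbOfCardEq, ← prod_mul_prod_compl s w]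
    simp only [Pi.inv_apply, prod_inv_distrib]
    field_simp
    linear_combination (∏ e ∈ sᶜ, w e) * hsq
  · rw [if_neg hs, dite_mul]
    split_ifs with hcard
    · have hdisconn : ¬ ∀ a b, Reach hm tm (Set.range (s.finEmbOfCardEq hcard)) a b := by
        simpa using fun hconn => hs ⟨hcard, hconn⟩
      rw [← det_reducedIncMatrix_submatrix_ne_zero_iff hm tm hloop, not_not] at hdisconn
      simp [hdisconn]
    · exact zero_mul _

open scoped Classical in
theorem weighted_matrix_tree {n : ℕ} {E : Type*} [Fintype E]
    (hm tm : E → Fin (n + 1))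
    (hconn : ∀ a b : Fin (n + 1), Reach hm tm Set.univ a b)
    (hloop : ∀ e, hm e ≠ tm e)
    (w : E → ℝ) (hw : ∀ e, 0 < w e) :
    (lap hm tm w).det =
      (∑ T ∈ Finset.univ.filter fun T : Finset E => IsSpanningTree hm tm T,
        ∏ e ∈ Tᶜ, w e) / ∏ e, w e :=
  weighted_matrix_tree_general hm tm hloop w hw
end

section
/- Let Γ be a connected finite directed graph without self-loops with vertex set {1,…,N}, N ≥ 2, and let t = (t_e)_{e∈Γ₁} be positive weights. Then M_Γ(t) is invertible, and for every edge e ∈ Γ₁ and every 1 ≤ j ≤ N−1, the quantity (d_Γ^{−1})^{ej} := (1/t_e) Σ_{i=1}^{N−1} ρ^e_i (M_Γ(t)^{−1})_{ij} satisfies |(d_Γ^{−1})^{ej}| ≤ 2. -/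
/-!
Let `M := lap hm tm w`, put `x := M⁻¹ eⱼ`, extend it by `0` on the last vertex to a potential `φ`,
and let the current through `f` be `c f = (φ (h f) - φ (t f)) / w f`; the quantity to bound is
`c e`. Since `M x = eⱼ`, `c` is a unit flow from vertex `j` to the last vertex. Currents run
downhill, so all edges crossing the boundary of the superlevel set
`S = {v | φ v > (φ (h e) + φ (t e)) / 2}` carry current out of `S`, and `e` is one of them; their
total is the net outflow of `S`, which is at most `1`. Hence `|c e| ≤ 1`.
The same summation by parts gives `xᵀ M x = ∑ f, (φ (h f) - φ (t f))² / w f`, which vanishes only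
for `φ` constant, i.e. `x = 0`, by connectivity; so `M` is positive definite.
-/

open Finset

open scoped Matrix

section Flow

variable {V E : Type*} [Fintype V] [DecidableEq V] [Fintype E] (hm tm : E → V)

def divergence (c : E → ℝ) (v : V) : ℝ := ∑ f, inc hm tm f v * c f

noncomputable def current (w : E → ℝ) (φ : V → ℝ) (f : E) : ℝ := (φ (hm f) - φ (tm f)) / w f

omit [Fintype E] in
lemma sum_inc_mul {f : E} (hf : hm f ≠ tm f) (ψ : V → ℝ) :
    ∑ v, inc hm tm f v * ψ v = ψ (hm f) - ψ (tm f) := by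
  have h : ∀ v, inc hm tm f v * ψ v =
      (if hm f = v then ψ v else 0) - (if tm f = v then ψ v else 0) := by
    intro v
    unfold inc
    by_cases h1 : hm f = v
    · simp [h1, show tm f ≠ v from fun h2 => hf (h1.trans h2.symm)]
    · by_cases h2 : tm f = v <;> simp [h1, h2]
  simp [h, Finset.sum_sub_distrib]

lemma sum_mul_divergence (hloop : ∀ f, hm f ≠ tm f) (χ : V → ℝ) (c : E → ℝ) :
    ∑ v, χ v * divergence hm tm c v = ∑ f, c f * (χ (hm f) - χ (tm f)) := by
  simp only [divergence, Finset.mul_sum]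
  rw [Finset.sum_comm]
  refine Finset.sum_congr rfl fun f _ => ?_
  rw [← sum_inc_mul hm tm (hloop f), Finset.mul_sum]
  exact Finset.sum_congr rfl fun v _ => by ring

lemma sum_divergence_eq_zero (hloop : ∀ f, hm f ≠ tm f) (c : E → ℝ) :
    ∑ v, divergence hm tm c v = 0 := by
  simpa using sum_mul_divergence hm tm hloop 1 c

lemma current_mul_step_nonneg {w : ℝ} (hw : 0 < w) (a b s : ℝ) :
    0 ≤ (a - b) / w * ((if s < a then 1 else 0) - (if s < b then 1 else 0)) := by
  split_ifs with ha hb hb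
  · simp
  · exact mul_nonneg (div_nonneg (by linarith) hw.le) (by norm_num)
  · exact mul_nonneg_of_nonpos_of_nonpos (div_nonpos_of_nonpos_of_nonneg (by linarith) hw.le)
      (by norm_num)
  · simp

lemma abs_current_le_mul_step_midpoint {w : ℝ} (hw : 0 < w) (a b : ℝ) :
    |(a - b) / w| ≤
      (a - b) / w * ((if (a + b) / 2 < a then 1 else 0) - (if (a + b) / 2 < b then 1 else 0)) := by
  rcases lt_trichotomy a b with h | rfl | h
  · have hc : (a - b) / w ≤ 0 := div_nonpos_of_nonpos_of_nonneg (by linarith) hw.le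
    rw [if_neg (by linarith), if_pos (by linarith), abs_of_nonpos hc]
    linarith
  · simp
  · have hc : 0 ≤ (a - b) / w := div_nonneg (by linarith) hw.le
    rw [if_pos (by linarith), if_neg (by linarith), abs_of_nonneg hc]
    linarith

theorem abs_current_le_one (hloop : ∀ f, hm f ≠ tm f) {w : E → ℝ} (hw : ∀ f, 0 < w f)
    (φ : V → ℝ) {a : V} (ha : divergence hm tm (current hm tm w φ) a ≤ 1)
    (hsink : ∀ v ≠ a, divergence hm tm (current hm tm w φ) v ≤ 0) (e : E) :
    |current hm tm w φ e| ≤ 1 := by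
  set c := current hm tm w φ
  set s := (φ (hm e) + φ (tm e)) / 2
  set χ : V → ℝ := fun v => if s < φ v then 1 else 0
  have hχ : ∀ v, 0 ≤ χ v := fun v => by simp only [χ]; split_ifs <;> norm_num
  calc |c e| ≤ c e * (χ (hm e) - χ (tm e)) := abs_current_le_mul_step_midpoint (hw e) _ _
    _ ≤ ∑ f, c f * (χ (hm f) - χ (tm f)) :=
      Finset.single_le_sum (fun f _ => current_mul_step_nonneg (hw f) (φ (hm f)) (φ (tm f)) s)
        (mem_univ e)
    _ = ∑ v, χ v * divergence hm tm c v := (sum_mul_divergence hm tm hloop χ c).symm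
    _ = χ a * divergence hm tm c a + ∑ v ∈ univ.erase a, χ v * divergence hm tm c v :=
      (Finset.add_sum_erase _ _ (mem_univ a)).symm
    _ ≤ 1 + 0 := by
      gcongr
      · simp only [χ]; split_ifs <;> linarith
      · exact Finset.sum_nonpos fun v hv =>
          mul_nonpos_of_nonneg_of_nonpos (hχ v) (hsink v (Finset.ne_of_mem_erase hv))
    _ = 1 := add_zero 1

end Flow

lemma Reach.apply_eq {V E : Type*} {hm tm : E → V} {S : Set E} {a b : V}
    (hab : Reach hm tm S a b) {φ : V → ℝ} (h : ∀ f ∈ S, φ (hm f) = φ (tm f)) : φ a = φ b := by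
  induction hab with
  | rel a b hab => obtain ⟨f, hf, rfl, rfl⟩ := hab; exact h f hf
  | refl => rfl
  | symm _ _ _ ih => exact ih.symm
  | trans _ _ _ _ _ ih₁ ih₂ => exact ih₁.trans ih₂

section Laplacian

variable {n : ℕ} {E : Type*} [Fintype E] (hm tm : E → Fin (n + 1))

omit [Fintype E] in
lemma sum_inc_castSucc_mul {f : E} (hf : hm f ≠ tm f) (x : Fin n → ℝ) :
    ∑ i : Fin n, inc hm tm f i.castSucc * x i =
      (Fin.snoc x 0 : Fin (n + 1) → ℝ) (hm f) - (Fin.snoc x 0 : Fin (n + 1) → ℝ) (tm f) := by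
  rw [← sum_inc_mul hm tm hf, Fin.sum_univ_castSucc]
  simp

lemma lap_mulVec_apply (hloop : ∀ f, hm f ≠ tm f) (w : E → ℝ) (x : Fin n → ℝ) (i : Fin n) :
    (lap hm tm w *ᵥ x) i = divergence hm tm (current hm tm w (Fin.snoc x 0)) i.castSucc := by
  simp only [Matrix.mulVec, dotProduct, lap, Matrix.of_apply, divergence, current,
    ← sum_inc_castSucc_mul hm tm (hloop _) x, Finset.sum_mul, Finset.mul_sum, Finset.sum_div]
  rw [Finset.sum_comm]
  exact Finset.sum_congr rfl fun f _ => Finset.sum_congr rfl fun k _ => by ring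

lemma dotProduct_lap_mulVec (hloop : ∀ f, hm f ≠ tm f) (w : E → ℝ) (x : Fin n → ℝ) :
    x ⬝ᵥ (lap hm tm w *ᵥ x) =
      ∑ f, ((Fin.snoc x 0 : Fin (n + 1) → ℝ) (hm f) - (Fin.snoc x 0 : Fin (n + 1) → ℝ) (tm f)) ^ 2
        / w f := by
  have h := sum_mul_divergence hm tm hloop (Fin.snoc x 0) (current hm tm w (Fin.snoc x 0))
  rw [Fin.sum_univ_castSucc] at h
  simp only [Fin.snoc_castSucc, Fin.snoc_last, zero_mul, add_zero, ← lap_mulVec_apply hm tm hloop]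
    at h
  simp only [dotProduct, h, current]
  exact Finset.sum_congr rfl fun f _ => by ring

lemma lap_posDef (hconn : ∀ a b : Fin (n + 1), Reach hm tm Set.univ a b)
    (hloop : ∀ f, hm f ≠ tm f) {w : E → ℝ} (hw : ∀ f, 0 < w f) :
    (lap hm tm w).PosDef := by
  refine Matrix.posDef_iff_dotProduct_mulVec.mpr ⟨?_, fun x hx => ?_⟩
  · ext i k
    simp only [Matrix.conjTranspose_apply, lap, Matrix.of_apply, star_trivial]
    exact Finset.sum_congr rfl fun f _ => by ring
  set φ : Fin (n + 1) → ℝ := Fin.snoc x 0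
  have hterm : ∀ f ∈ univ, 0 ≤ (φ (hm f) - φ (tm f)) ^ 2 / w f :=
    fun f _ => div_nonneg (sq_nonneg _) (hw f).le
  rw [star_trivial, dotProduct_lap_mulVec hm tm hloop]
  refine (Finset.sum_nonneg hterm).lt_of_ne fun hzero => hx ?_
  have hflat : ∀ f ∈ (Set.univ : Set E), φ (hm f) = φ (tm f) := fun f _ => by
    have := (Finset.sum_eq_zero_iff_of_nonneg hterm).mp hzero.symm f (mem_univ f)
    rw [div_eq_zero_iff, or_iff_left (hw f).ne'] at this
    exact sub_eq_zero.mp (pow_eq_zero_iff two_ne_zero |>.mp this)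
  funext i
  simpa [φ] using (hconn i.castSucc (Fin.last n)).apply_eq hflat

end Laplacian

theorem lap_inverse_incidence_bound_general {n : ℕ} {E : Type*} [Fintype E]
    (hm tm : E → Fin (n + 1))
    (hconn : ∀ a b : Fin (n + 1), Reach hm tm Set.univ a b)
    (hloop : ∀ e, hm e ≠ tm e)
    (w : E → ℝ) (hw : ∀ e, 0 < w e) (e : E) (j : Fin n) :
    IsUnit (lap hm tm w) ∧
    |(1 / w e) * ∑ i : Fin n, inc hm tm e i.castSucc * (lap hm tm w)⁻¹ i j| ≤ 2 := by
  set M := lap hm tm w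
  have hM : IsUnit M := (lap_posDef hm tm hconn hloop hw).isUnit
  refine ⟨hM, ?_⟩
  set x := M⁻¹ *ᵥ Pi.single j 1
  set c := current hm tm w (Fin.snoc x 0)
  have hdiv : ∀ i, divergence hm tm c i.castSucc = (Pi.single j 1 : Fin n → ℝ) i := fun i => by
    rw [← lap_mulVec_apply hm tm hloop, Matrix.mulVec_mulVec,
      Matrix.mul_nonsing_inv _ ((Matrix.isUnit_iff_isUnit_det M).mp hM), Matrix.one_mulVec]
  have hlast : divergence hm tm c (Fin.last n) = -1 := by
    have := sum_divergence_eq_zero hm tm hloop c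
    simp only [Fin.sum_univ_castSucc, hdiv, Finset.sum_pi_single'] at this
    simpa using eq_neg_of_add_eq_zero_right this
  have hsink : ∀ v ≠ j.castSucc, divergence hm tm c v ≤ 0 := by
    refine Fin.lastCases (fun _ => hlast.le.trans (by norm_num)) fun i hi => ?_
    rw [hdiv, Pi.single_eq_of_ne (fun h => hi (congrArg Fin.castSucc h))]
  have hquant : (1 / w e) * ∑ i : Fin n, inc hm tm e i.castSucc * M⁻¹ i j = c e := by
    simp only [c, current, ← sum_inc_castSucc_mul hm tm (hloop e), x, Matrix.mulVec_single_one,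
      Matrix.col_apply]
    ring
  have hsource : divergence hm tm c j.castSucc ≤ 1 := by rw [hdiv, Pi.single_eq_same]
  rw [hquant]
  linarith [abs_current_le_one hm tm hloop hw _ hsource hsink e]

theorem lap_inverse_incidence_bound {n : ℕ} (hn : 1 ≤ n) {E : Type*} [Fintype E]
    (hm tm : E → Fin (n + 1))
    (hconn : ∀ a b : Fin (n + 1), Reach hm tm Set.univ a b)
    (hloop : ∀ e, hm e ≠ tm e)
    (w : E → ℝ) (hw : ∀ e, 0 < w e) (e : E) (j : Fin n) :
    IsUnit (lap hm tm w) ∧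
    |(1 / w e) * ∑ i : Fin n, inc hm tm e i.castSucc * (lap hm tm w)⁻¹ i j| ≤ 2 :=
  lap_inverse_incidence_bound_general hm tm hconn hloop w hw e j
end

section
/- Let Γ be a connected finite directed graph without self-loops with vertex set {1,…,N}, and let Γ' be a subgraph with edge set Γ'₁. Then: (i) for every spanning tree T of Γ, h₁(Γ') ≤ |Γ'₁ ∖ T| ≤ h₁(Γ) = |Γ₁| − N + 1; and (ii) there exists a spanning tree T of Γ with |Γ'₁ ∖ T| = h₁(Γ'). Consequently, after substituting t_e = ρ ξ_e for e ∈ Γ'₁ (with all ξ_e and the remaining t_e held fixed and positive), the spanning-tree polynomial Σ_{T ∈ Tree(Γ)} Π_{e ∉ T} t_e is a polynomial in ρ whose nonzero monomials have ρ-degree between h₁(Γ') and h₁(Γ), and whose coefficient in degree h₁(Γ') is nonzero. -/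
open Finset

/-- The vertex set of the subgraph generated by the edge set `S`:
all endpoints of edges of `S`. -/
def vertexSet {n : ℕ} {E : Type*} [DecidableEq E]
    (hm tm : E → Fin (n + 1)) (S : Finset E) : Finset (Fin (n + 1)) :=
  S.image hm ∪ S.image tm

/-- The number of connected components of the subgraph with edge set `S`
(on its vertex set `vertexSet hm tm S`). -/
noncomputable def numComponentsOn {n : ℕ} {E : Type*} [DecidableEq E]
    (hm tm : E → Fin (n + 1)) (S : Finset E) : ℕ :=
  Nat.card (Quotient (Setoid.comap
    (Subtype.val : {v // v ∈ vertexSet hm tm S} → Fin (n + 1))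
    (Relation.EqvGen.setoid fun a b => ∃ e ∈ (↑S : Set E), hm e = a ∧ tm e = b)))

/-- The first Betti number `h₁(Γ') = |Γ'₁| - |Γ'₀| + c(Γ')` of the subgraph with
edge set `S` (written here with truncated subtraction as `|Γ'₁| + c(Γ') - |Γ'₀|`). -/
noncomputable def betti1 {n : ℕ} {E : Type*} [DecidableEq E]
    (hm tm : E → Fin (n + 1)) (S : Finset E) : ℕ :=
  S.card + numComponentsOn hm tm S - (vertexSet hm tm S).card

/-!
Write `κ(A)` for the number of connected components of the graph `(Γ₀, A)`, isolated vertices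
included. Adding an edge lowers `κ` by at most one, so `κ(A) + |A|` is monotone in `A`, and
`h₁(Γ') = |S| + κ(S) - N` because the vertices outside `Γ'₀` are isolated. For a spanning tree `T`
this gives `κ(S) ≤ κ(S ∩ T) ≤ 1 + |T \ S|`, i.e. `h₁(Γ') ≤ |S \ T|`. Conversely, extend a maximal
forest `F ⊆ S` (so `κ(F) = κ(S)`) greedily to a spanning tree `T ⊇ F`; then
`|S \ T| ≤ |S| - |F| = h₁(Γ')`. Grouping the spanning trees by `|S \ T|`, their degree in `ρ`,
gives the polynomial statement.
-/

theorem Setoid.card_quotient_le_of_le {α : Type*} [Finite α] {r s : Setoid α} (h : r ≤ s) :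
    Nat.card (Quotient s) ≤ Nat.card (Quotient r) :=
  Nat.card_le_card_of_surjective (Setoid.map_of_le h) fun q => q.inductionOn fun a => ⟨⟦a⟧, rfl⟩

theorem Setoid.card_quotient_lt_of_le {α : Type*} [Finite α] {r s : Setoid α} (h : r ≤ s)
    {a b : α} (hs : s a b) (hr : ¬ r a b) :
    Nat.card (Quotient s) < Nat.card (Quotient r) := by
  have := Fintype.ofFinite (Quotient r)
  have := Fintype.ofFinite (Quotient s)
  simp only [Nat.card_eq_fintype_card]
  refine Fintype.card_lt_of_surjective_not_injective (Setoid.map_of_le h)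
    (fun q => q.inductionOn fun a => ⟨⟦a⟧, rfl⟩) fun hinj => hr (Quotient.exact ?_)
  exact hinj (Quotient.sound hs)

theorem Nat.card_le_card_add_one_of_injOn_compl_singleton {α β : Type*} [Finite α] [Finite β]
    (f : α → β) (x : α) (hf : Set.InjOn f {x}ᶜ) : Nat.card α ≤ Nat.card β + 1 := by
  have := Set.ncard_le_ncard_of_injOn f (fun _ _ => Set.mem_univ _) hf
  rw [Set.ncard_univ] at this
  have := Set.ncard_add_ncard_compl {x}
  rw [Set.ncard_singleton] at this
  omega

section Components

variable {V E : Type*} {hm tm : E → V}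

theorem Reach.refl (A : Set E) (a : V) : Reach hm tm A a a := Relation.EqvGen.refl a

theorem Reach.symm {A : Set E} {a b : V} (h : Reach hm tm A a b) : Reach hm tm A b a :=
  Relation.EqvGen.symm a b h

theorem Reach.trans {A : Set E} {a b c : V} (hab : Reach hm tm A a b)
    (hbc : Reach hm tm A b c) : Reach hm tm A a c :=
  Relation.EqvGen.trans a b c hab hbc

theorem reach_of_mem {A : Set E} {e : E} (he : e ∈ A) : Reach hm tm A (hm e) (tm e) :=
  .rel _ _ ⟨e, he, rfl, rfl⟩

theorem Reach.mono {A B : Set E} (hAB : A ⊆ B) {a b : V} (h : Reach hm tm A a b) :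
    Reach hm tm B a b :=
  Relation.EqvGen.mono (fun _ _ ⟨e, he, hh, ht⟩ => ⟨e, hAB he, hh, ht⟩) a b h

theorem Reach.of_insert {A : Set E} {e : E} {a b : V} (h : Reach hm tm (insert e A) a b) :
    Reach hm tm A a b ∨
      (Reach hm tm A a (hm e) ∨ Reach hm tm A a (tm e)) ∧
        (Reach hm tm A b (hm e) ∨ Reach hm tm A b (tm e)) := by
  induction h with
  | rel a b hab =>
    obtain ⟨f, rfl | hf, rfl, rfl⟩ := hab
    · exact .inr ⟨.inl (.refl A _), .inr (.refl A _)⟩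
    · exact .inl (reach_of_mem hf)
  | refl a => exact .inl (.refl A a)
  | symm a b _ ih => exact ih.imp Reach.symm And.symm
  | trans a b c _ _ ih₁ ih₂ =>
    rcases ih₁ with hab | ⟨ha, hb⟩ <;> rcases ih₂ with hbc | ⟨hb', hc⟩
    · exact .inl (hab.trans hbc)
    · exact .inr ⟨hb'.imp hab.trans hab.trans, hc⟩
    · exact .inr ⟨ha, hb.imp hbc.symm.trans hbc.symm.trans⟩
    · exact .inr ⟨ha, hc⟩

variable (hm tm)

def reachSetoid (A : Finset E) : Setoid V :=
  Relation.EqvGen.setoid fun a b => ∃ e ∈ (↑A : Set E), hm e = a ∧ tm e = b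

/-- Components of `(V, A)` counted on all of `V`, unlike `numComponentsOn`. -/
noncomputable def numComponents (A : Finset E) : ℕ :=
  Nat.card (Quotient (reachSetoid hm tm A))

theorem reachSetoid_mono {A B : Finset E} (hAB : A ⊆ B) :
    reachSetoid hm tm A ≤ reachSetoid hm tm B :=
  fun _ _ => Reach.mono (Finset.coe_subset.2 hAB)

theorem numComponents_empty : numComponents hm tm ∅ = Nat.card V := by
  have : reachSetoid hm tm (∅ : Finset E) = ⊥ :=
    le_bot_iff.1 (Setoid.eqvGen_le fun _ _ ⟨_, he, _⟩ => absurd he (Finset.notMem_empty _))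
  rw [numComponents, this, Nat.card_congr Setoid.quotientBotEquiv]

theorem numComponents_eq_one_iff [Nonempty V] (A : Finset E) :
    numComponents hm tm A = 1 ↔ ∀ a b, Reach hm tm (↑A) a b := by
  rw [numComponents, Nat.card_eq_one_iff_unique,
    and_iff_left (.map (Quotient.mk (reachSetoid hm tm A)) ‹_›), Quotient.subsingleton_iff,
    Setoid.eq_top_iff]
  rfl

/-- Acyclicity of `F` in counting form: each edge of `F` merges two components. -/
def IsForest (F : Finset E) : Prop :=
  numComponents hm tm F + F.card = Nat.card V

theorem isForest_empty : IsForest hm tm (∅ : Finset E) := by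
  simp [IsForest, numComponents_empty]

theorem numComponents_eq_of_forall_reach {A B : Finset E} (hAB : A ⊆ B)
    (h : ∀ e ∈ B, Reach hm tm (↑A) (hm e) (tm e)) :
    numComponents hm tm A = numComponents hm tm B := by
  rw [numComponents, numComponents, le_antisymm (reachSetoid_mono hm tm hAB) (Setoid.eqvGen_le ?_)]
  rintro _ _ ⟨e, he, rfl, rfl⟩
  exact h e he

variable [Finite V]

theorem numComponents_antitone {A B : Finset E} (hAB : A ⊆ B) :
    numComponents hm tm B ≤ numComponents hm tm A :=
  Setoid.card_quotient_le_of_le (reachSetoid_mono hm tm hAB)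

variable [DecidableEq E]

theorem numComponents_le_numComponents_insert_add_one (e : E) (A : Finset E) :
    numComponents hm tm A ≤ numComponents hm tm (insert e A) + 1 := by
  -- the induced map on components is injective away from the class of `tm e`
  refine Nat.card_le_card_add_one_of_injOn_compl_singleton
    (Setoid.map_of_le (reachSetoid_mono hm tm (Finset.subset_insert e A))) ⟦tm e⟧ ?_
  rintro ⟨a⟩ ha ⟨b⟩ hb hab
  have ha : ¬Reach hm tm (↑A) a (tm e) := fun h => ha (Quotient.sound h)
  have hb : ¬Reach hm tm (↑A) b (tm e) := fun h => hb (Quotient.sound h)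
  have hab : Reach hm tm ↑(insert e A) a b := Quotient.exact hab
  rw [Finset.coe_insert] at hab
  rcases hab.of_insert with h | ⟨ha', hb'⟩
  · exact Quotient.sound h
  · exact Quotient.sound ((ha'.resolve_right ha).trans (hb'.resolve_right hb).symm)

theorem numComponents_insert_lt {e : E} {A : Finset E} (h : ¬Reach hm tm (↑A) (hm e) (tm e)) :
    numComponents hm tm (insert e A) < numComponents hm tm A :=
  Setoid.card_quotient_lt_of_le (reachSetoid_mono hm tm (Finset.subset_insert e A))
    (reach_of_mem (Finset.mem_coe.2 (Finset.mem_insert_self e A))) h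

theorem numComponents_le_numComponents_union_add_card (A C : Finset E) :
    numComponents hm tm A ≤ numComponents hm tm (A ∪ C) + C.card := by
  induction C using Finset.induction_on with
  | empty => simp
  | insert e C he ih =>
    have := numComponents_le_numComponents_insert_add_one hm tm e (A ∪ C)
    rw [Finset.union_insert, Finset.card_insert_of_notMem he]
    omega

theorem numComponents_add_card_le {A B : Finset E} (hAB : A ⊆ B) :
    numComponents hm tm A + A.card ≤ numComponents hm tm B + B.card := by
  have := numComponents_le_numComponents_union_add_card hm tm A (B \ A)
  rw [Finset.union_sdiff_of_subset hAB] at this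
  have := Finset.card_sdiff_add_card_eq_card hAB
  omega

theorem card_le_numComponents_add_card (A : Finset E) :
    Nat.card V ≤ numComponents hm tm A + A.card := by
  simpa [numComponents_empty] using numComponents_add_card_le hm tm (Finset.empty_subset A)

variable {hm tm} in
theorem IsForest.insert_of_not_reach {F : Finset E} {e : E} (hF : IsForest hm tm F)
    (h : ¬Reach hm tm (↑F) (hm e) (tm e)) : IsForest hm tm (insert e F) := by
  have he : e ∉ F := fun he => h (reach_of_mem he)
  have := numComponents_insert_lt hm tm h
  have := card_le_numComponents_add_card hm tm (insert e F)
  rw [IsForest, Finset.card_insert_of_notMem he] at *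
  omega

theorem exists_isForest_between {A B : Finset E} (hA : IsForest hm tm A) (hAB : A ⊆ B) :
    ∃ F, A ⊆ F ∧ F ⊆ B ∧ IsForest hm tm F ∧ numComponents hm tm F = numComponents hm tm B := by
  classical
  obtain ⟨F, hF, hmax⟩ := (B.powerset.filter fun F => A ⊆ F ∧ IsForest hm tm F).exists_max_image
    Finset.card ⟨A, by simp [hAB, hA]⟩
  simp only [Finset.mem_filter, Finset.mem_powerset] at hF hmax
  obtain ⟨hFB, hAF, hFor⟩ := hF
  refine ⟨F, hAF, hFB, hFor, numComponents_eq_of_forall_reach hm tm hFB fun e he => ?_⟩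
  by_contra h
  have heF : e ∉ F := fun heF => h (reach_of_mem heF)
  have := hmax (insert e F) ⟨Finset.insert_subset he hFB, hAF.trans (Finset.subset_insert e F),
    hFor.insert_of_not_reach h⟩
  rw [Finset.card_insert_of_notMem heF] at this
  omega

end Components

theorem Setoid.card_quotient_eq_card_quotient_comap_add {α : Type*} [Fintype α] [DecidableEq α]
    (s : Setoid α) (U : Finset α) (h : ∀ a b, s a b → a = b ∨ a ∈ U ∧ b ∈ U) :
    Nat.card (Quotient s) =
      Nat.card (Quotient (s.comap (Subtype.val : {v // v ∈ U} → α))) + Uᶜ.card := by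
  set q := Quotient.mk s
  have hdisj : Disjoint (q '' ↑U) (q '' ↑Uᶜ) := by
    refine Set.disjoint_left.2 ?_
    rintro _ ⟨a, ha, rfl⟩ ⟨b, hb, hab⟩
    rcases h b a (Quotient.exact hab) with rfl | ⟨hb', -⟩
    · exact (Finset.mem_compl.1 hb) ha
    · exact (Finset.mem_compl.1 hb) hb'
  have hinj : Set.InjOn q ↑Uᶜ := fun a ha b _ hab =>
    (h a b (Quotient.exact hab)).resolve_right fun hU => Finset.mem_compl.1 ha hU.1
  have hrange : Set.range (q ∘ (Subtype.val : {v // v ∈ U} → α)) = q '' ↑U := by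
    rw [Set.range_comp, Subtype.range_coe_subtype]
    rfl
  rw [Nat.card_congr (Setoid.comapQuotientEquiv (Subtype.val : {v // v ∈ U} → α) s), hrange,
    Nat.card_coe_set_eq, ← Set.ncard_coe_finset, ← hinj.ncard_image,
    ← Set.ncard_union_eq hdisj, ← Set.image_union, Finset.coe_compl, Set.union_compl_self,
    Set.image_univ_of_surjective Quotient.mk_surjective, Set.ncard_univ]

section SpanningTrees

variable {n : ℕ} {E : Type*} (hm tm : E → Fin (n + 1))

theorem isSpanningTree_iff [Fintype E] {T : Finset E} :
    IsSpanningTree hm tm T ↔ T.card = n ∧ numComponents hm tm T = 1 := by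
  rw [IsSpanningTree, numComponents_eq_one_iff]

variable [DecidableEq E]

theorem Reach.eq_or_mem_vertexSet {S : Finset E} {a b : Fin (n + 1)}
    (h : Reach hm tm (↑S) a b) :
    a = b ∨ a ∈ vertexSet hm tm S ∧ b ∈ vertexSet hm tm S := by
  induction h with
  | rel a b hab =>
    obtain ⟨e, he, rfl, rfl⟩ := hab
    exact .inr ⟨Finset.mem_union_left _ (Finset.mem_image_of_mem _ he),
      Finset.mem_union_right _ (Finset.mem_image_of_mem _ he)⟩
  | refl a => exact .inl rfl
  | symm a b _ ih => exact ih.imp Eq.symm And.symm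
  | trans a b c _ _ ih₁ ih₂ =>
    rcases ih₁ with rfl | ⟨ha, hb⟩
    · exact ih₂
    · rcases ih₂ with rfl | ⟨-, hc⟩
      · exact .inr ⟨ha, hb⟩
      · exact .inr ⟨ha, hc⟩

/-- Vertices outside `vertexSet hm tm S` are isolated in `(Fin (n + 1), S)`. -/
theorem numComponents_eq_numComponentsOn_add (S : Finset E) :
    numComponents hm tm S = numComponentsOn hm tm S + (vertexSet hm tm S)ᶜ.card :=
  Setoid.card_quotient_eq_card_quotient_comap_add _ _ fun _ _ => Reach.eq_or_mem_vertexSet hm tm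

theorem betti1_eq (S : Finset E) : betti1 hm tm S = S.card + numComponents hm tm S - (n + 1) := by
  have := numComponents_eq_numComponentsOn_add hm tm S
  have := (vertexSet hm tm S).card_le_univ
  rw [Finset.card_compl, Fintype.card_fin] at *
  rw [betti1]
  omega

variable [Fintype E] {hm tm}

theorem IsSpanningTree.betti1_le_card_sdiff {T : Finset E} (hT : IsSpanningTree hm tm T)
    (S : Finset E) : betti1 hm tm S ≤ (S \ T).card := by
  obtain ⟨hTcard, hTconn⟩ := (isSpanningTree_iff hm tm).1 hT
  have := numComponents_add_card_le hm tm (Finset.inter_subset_right : S ∩ T ⊆ T)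
  have := numComponents_antitone hm tm (Finset.inter_subset_left : S ∩ T ⊆ S)
  have := Finset.card_inter_add_card_sdiff S T
  rw [betti1_eq]
  omega

theorem IsSpanningTree.card_sdiff_le {T : Finset E} (hT : IsSpanningTree hm tm T)
    (S : Finset E) : (S \ T).card ≤ Fintype.card E - n := by
  rw [← hT.1, ← Finset.card_compl, Finset.sdiff_eq_inter_compl]
  exact Finset.card_le_card Finset.inter_subset_right

theorem exists_isSpanningTree_card_sdiff_eq_betti1
    (hconn : ∀ a b : Fin (n + 1), Reach hm tm Set.univ a b) (S : Finset E) :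
    ∃ T, IsSpanningTree hm tm T ∧ (S \ T).card = betti1 hm tm S := by
  obtain ⟨F, -, hFS, hF, hFκ⟩ :=
    exists_isForest_between hm tm (isForest_empty hm tm) (Finset.empty_subset S)
  obtain ⟨T, hFT, -, hT, hTκ⟩ := exists_isForest_between hm tm hF (Finset.subset_univ F)
  have huniv : numComponents hm tm Finset.univ = 1 :=
    (numComponents_eq_one_iff hm tm _).2 (by simpa using hconn)
  rw [IsForest, Nat.card_eq_fintype_card, Fintype.card_fin] at hF hT
  have hTree : IsSpanningTree hm tm T := (isSpanningTree_iff hm tm).2 ⟨by omega, by omega⟩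
  refine ⟨T, hTree, le_antisymm ?_ (hTree.betti1_le_card_sdiff S)⟩
  have := Finset.card_le_card (Finset.sdiff_subset_sdiff (subset_refl S) hFT)
  rw [Finset.card_sdiff_of_subset hFS] at this
  rw [betti1_eq]
  omega

end SpanningTrees

theorem Finset.prod_compl_ite_mem_mul {ι M : Type*} [Fintype ι] [DecidableEq ι] [CommMonoid M]
    (S T : Finset ι) (ρ : M) (ξ s : ι → M) :
    ∏ e ∈ Tᶜ, (if e ∈ S then ρ * ξ e else s e) =
      ρ ^ (S \ T).card * ((∏ e ∈ S \ T, ξ e) * ∏ e ∈ Tᶜ \ S, s e) := by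
  have hST : Tᶜ ∩ S = S \ T := by rw [Finset.inter_comm, Finset.sdiff_eq_inter_compl]
  rw [Finset.prod_ite, Finset.filter_mem_eq_inter, Finset.filter_notMem_eq_sdiff, hST,
    Finset.prod_mul_distrib, Finset.prod_const, mul_assoc]

theorem Finset.sum_pow_mul_eq_sum_fiberwise {ι R : Type*} [CommSemiring R] {s : Finset ι}
    {t : Finset ℕ} {d : ι → ℕ} (h : ∀ i ∈ s, d i ∈ t) (w : ι → R) (ρ : R) :
    ∑ i ∈ s, ρ ^ d i * w i = ∑ k ∈ t, (∑ i ∈ s with d i = k, w i) * ρ ^ k := by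
  rw [← Finset.sum_fiberwise_of_maps_to h]
  refine Finset.sum_congr rfl fun k _ => ?_
  rw [Finset.sum_mul]
  refine Finset.sum_congr rfl fun i hi => ?_
  rw [(Finset.mem_filter.1 hi).2, mul_comm]

open scoped Classical in
theorem spanning_tree_polynomial_general {n : ℕ} {E : Type*} [Fintype E] [DecidableEq E]
    (hm tm : E → Fin (n + 1))
    (hconn : ∀ a b : Fin (n + 1), Reach hm tm Set.univ a b)
    (S : Finset E) (ξ s : E → ℝ) (hξ : ∀ e, 0 < ξ e) (hs : ∀ e, 0 < s e) :
    (∀ T : Finset E, IsSpanningTree hm tm T →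
        betti1 hm tm S ≤ (S \ T).card ∧ (S \ T).card ≤ Fintype.card E - n) ∧
    (∃ T : Finset E, IsSpanningTree hm tm T ∧ (S \ T).card = betti1 hm tm S) ∧
    (∃ c : ℕ → ℝ, c (betti1 hm tm S) ≠ 0 ∧ ∀ ρ : ℝ,
        (∑ T ∈ Finset.univ.filter fun T : Finset E => IsSpanningTree hm tm T,
          ∏ e ∈ Tᶜ, (if e ∈ S then ρ * ξ e else s e)) =
        ∑ k ∈ Finset.Icc (betti1 hm tm S) (Fintype.card E - n), c k * ρ ^ k) := by
  have bounds (T : Finset E) (hT : IsSpanningTree hm tm T) :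
      betti1 hm tm S ≤ (S \ T).card ∧ (S \ T).card ≤ Fintype.card E - n :=
    ⟨hT.betti1_le_card_sdiff S, hT.card_sdiff_le S⟩
  obtain ⟨T₀, hT₀, hT₀S⟩ := exists_isSpanningTree_card_sdiff_eq_betti1 hconn S
  set trees := Finset.univ.filter fun T : Finset E => IsSpanningTree hm tm T
  set w : Finset E → ℝ := fun T => (∏ e ∈ S \ T, ξ e) * ∏ e ∈ Tᶜ \ S, s e
  refine ⟨bounds, ⟨T₀, hT₀, hT₀S⟩, fun k => ∑ T ∈ trees with (S \ T).card = k, w T, ?_,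
    fun ρ => ?_⟩
  · refine (Finset.sum_pos (fun T _ => ?_) ⟨T₀, by simp [trees, hT₀, hT₀S]⟩).ne'
    exact mul_pos (Finset.prod_pos fun e _ => hξ e) (Finset.prod_pos fun e _ => hs e)
  · simp_rw [Finset.prod_compl_ite_mem_mul]
    exact Finset.sum_pow_mul_eq_sum_fiberwise
      (fun T hT => Finset.mem_Icc.2 (bounds T (Finset.mem_filter.1 hT).2)) w ρ

open scoped Classical in
theorem spanning_tree_polynomial {n : ℕ} {E : Type*} [Fintype E] [DecidableEq E]
    (hm tm : E → Fin (n + 1))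
    (hconn : ∀ a b : Fin (n + 1), Reach hm tm Set.univ a b)
    (hloop : ∀ e, hm e ≠ tm e)
    (S : Finset E) (ξ s : E → ℝ) (hξ : ∀ e, 0 < ξ e) (hs : ∀ e, 0 < s e) :
    (∀ T : Finset E, IsSpanningTree hm tm T →
        betti1 hm tm S ≤ (S \ T).card ∧ (S \ T).card ≤ Fintype.card E - n) ∧
    (∃ T : Finset E, IsSpanningTree hm tm T ∧ (S \ T).card = betti1 hm tm S) ∧
    (∃ c : ℕ → ℝ, c (betti1 hm tm S) ≠ 0 ∧ ∀ ρ : ℝ,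
        (∑ T ∈ Finset.univ.filter fun T : Finset E => IsSpanningTree hm tm T,
          ∏ e ∈ Tᶜ, (if e ∈ S then ρ * ξ e else s e)) =
        ∑ k ∈ Finset.Icc (betti1 hm tm S) (Fintype.card E - n), c k * ρ ^ k) :=
  spanning_tree_polynomial_general hm tm hconn S ξ s hξ hs
end

section
/- Let d ≥ 1, let Γ be a finite directed graph without self-loops with vertex set {1,…,N} and nonempty edge set Γ₁, let t = (t_e)_{e∈Γ₁} be positive reals, and let w = (w_1,…,w_N) ∈ (ℂ^d)^N. Define y_e = (1/(2 t_e)) Σ_{i=1}^N ρ^e_i conj(w_i) ∈ ℂ^d for each e ∈ Γ₁, and let L : (ℂ^d)^N × ℂ^{Γ₁} → (ℂ^d)^{Γ₁} be the ℂ-linear map L(u, s)_e = (1/(2 t_e)) Σ_{i=1}^N ρ^e_i u_i − (s_e / t_e) y_e. Then rank(L) ≤ dN + |Γ₁| − d − 1. (This rank bound is the linear-algebra core of the vanishing of the graph-integral integrand when a connected subgraph Γ' satisfies d|Γ'₀| < (d−1)|Γ'₁| + d + 1.) -/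
open Finset

/-!
The kernel of `L` contains a `(d + 1)`-dimensional space: translating every `u_i` by a common
vector `c` is invisible to the incidence sums `∑ i, ρ^e_i u_i` (each column of `ρ` sums to zero,
as `Γ` has no self-loops), and the direction `u_i = a · conj(w_i)`, `s_e = a · t_e` makes the two
terms of `L(u, s)_e` cancel. Rank–nullity then gives the bound.
-/

lemma LinearMap.finrank_range_add_le_of_injective_of_comp_eq_zero {K P M Q : Type*}
    [DivisionRing K] [AddCommGroup P] [Module K P] [AddCommGroup M] [Module K M]
    [FiniteDimensional K M] [AddCommGroup Q] [Module K Q]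
    {f : P →ₗ[K] M} (hf : Function.Injective f) {L : M →ₗ[K] Q} (hLf : L ∘ₗ f = 0) :
    Module.finrank K (LinearMap.range L) + Module.finrank K P ≤ Module.finrank K M := by
  have hle : LinearMap.range f ≤ LinearMap.ker L := LinearMap.range_le_ker_iff.mpr hLf
  rw [← L.finrank_range_add_finrank_ker, ← LinearMap.finrank_range_of_inj hf]
  exact Nat.add_le_add_left (Submodule.finrank_mono hle) _

section

variable {V E ι : Type*}

lemma sum_inc_eq_zero [Fintype V] [DecidableEq V] (hm tm : E → V) {e : E} (he : hm e ≠ tm e) :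
    ∑ i, inc hm tm e i = 0 := by
  have hsplit : ∀ i,
      inc hm tm e i = (if hm e = i then 1 else 0) - (if tm e = i then 1 else 0) := by
    intro i
    unfold inc
    split_ifs <;> simp_all
  simp [hsplit, sum_sub_distrib]

lemma sum_inc_mul_add_mul [Fintype V] [DecidableEq V] (hm tm : E → V) {e : E} (he : hm e ≠ tm e)
    (c a : ℂ) (z : V → ℂ) :
    ∑ i, (inc hm tm e i : ℂ) * (c + a * z i) = a * ∑ i, (inc hm tm e i : ℂ) * z i := by
  have hzero : ∑ i, (inc hm tm e i : ℂ) = 0 := by exact_mod_cast sum_inc_eq_zero hm tm he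
  simp only [mul_add, sum_add_distrib, ← sum_mul, hzero, zero_mul, zero_add, mul_sum]
  exact sum_congr rfl fun i _ => mul_left_comm _ _ _

def graphKernelMap (w : V → ι → ℂ) (t : E → ℝ) :
    ((ι → ℂ) × ℂ) →ₗ[ℂ] ((V → ι → ℂ) × (E → ℂ)) where
  toFun p := (fun i k => p.1 k + p.2 * starRingEnd ℂ (w i k), fun e => p.2 * t e)
  map_add' p q := by ext <;> simp <;> ring
  map_smul' c p := by ext <;> simp <;> ring

lemma graphKernelMap_injective (w : V → ι → ℂ) {t : E → ℝ} (i₀ : V) {e₀ : E} (ht : t e₀ ≠ 0) :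
    Function.Injective (graphKernelMap w t) := by
  rintro ⟨c, a⟩ ⟨c', a'⟩ h
  simp only [graphKernelMap, LinearMap.coe_mk, AddHom.coe_mk, Prod.mk.injEq] at h
  obtain ⟨hu, hs⟩ := h
  have ha : a = a' := mul_right_cancel₀ (Complex.ofReal_ne_zero.mpr ht) (congrFun hs e₀)
  subst ha
  have hc : c = c' := funext fun k => add_right_cancel (congrFun (congrFun hu i₀) k)
  rw [hc]

lemma comp_graphKernelMap_eq_zero [Fintype V] [DecidableEq V] (hm tm : E → V)
    (hloop : ∀ e, hm e ≠ tm e) {t : E → ℝ} (ht : ∀ e, t e ≠ 0) (w : V → ι → ℂ) (y : E → ι → ℂ)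
    (hy : ∀ e k, y e k =
      ((1 / (2 * t e) : ℝ) : ℂ) * ∑ i, ((inc hm tm e i : ℝ) : ℂ) * (starRingEnd ℂ) (w i k))
    (L : ((V → ι → ℂ) × (E → ℂ)) →ₗ[ℂ] (E → ι → ℂ))
    (hL : ∀ (u : V → ι → ℂ) (s : E → ℂ) (e : E) (k : ι),
      L (u, s) e k =
        ((1 / (2 * t e) : ℝ) : ℂ) * (∑ i, ((inc hm tm e i : ℝ) : ℂ) * u i k) -
          (s e / (t e : ℂ)) * y e k) :
    L ∘ₗ graphKernelMap w t = 0 := by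
  refine LinearMap.ext fun p => funext fun e => funext fun k => ?_
  have hte : (t e : ℂ) ≠ 0 := Complex.ofReal_ne_zero.mpr (ht e)
  simp only [LinearMap.comp_apply, graphKernelMap, LinearMap.coe_mk, AddHom.coe_mk, hL,
    sum_inc_mul_add_mul hm tm (hloop e), hy, LinearMap.zero_apply, Pi.zero_apply]
  field_simp
  ring

end

theorem graph_integrand_rank_bound_general (d : ℕ) {N : ℕ}
    {E : Type*} [Fintype E] (hE : Nonempty E)
    (hm tm : E → Fin N) (hloop : ∀ e, hm e ≠ tm e)
    (t : E → ℝ) (ht : ∀ e, 0 < t e)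
    (w : Fin N → Fin d → ℂ)
    (y : E → Fin d → ℂ)
    (hy : ∀ e k, y e k =
      ((1 / (2 * t e) : ℝ) : ℂ) * ∑ i, ((inc hm tm e i : ℝ) : ℂ) * (starRingEnd ℂ) (w i k))
    (L : ((Fin N → Fin d → ℂ) × (E → ℂ)) →ₗ[ℂ] (E → Fin d → ℂ))
    (hL : ∀ (u : Fin N → Fin d → ℂ) (s : E → ℂ) (e : E) (k : Fin d),
      L (u, s) e k =
        ((1 / (2 * t e) : ℝ) : ℂ) * (∑ i, ((inc hm tm e i : ℝ) : ℂ) * u i k) -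
          (s e / (t e : ℂ)) * y e k) :
    Module.finrank ℂ (LinearMap.range L) ≤ d * N + Fintype.card E - d - 1 := by
  obtain ⟨e₀⟩ := hE
  have hbound := LinearMap.finrank_range_add_le_of_injective_of_comp_eq_zero
    (graphKernelMap_injective w (hm e₀) (ht e₀).ne')
    (comp_graphKernelMap_eq_zero hm tm hloop (fun e => (ht e).ne') w y hy L hL)
  simp only [Module.finrank_prod, Module.finrank_pi_fintype, sum_const, mul_one,
    card_univ, Fintype.card_fin, smul_eq_mul, Module.finrank_self] at hbound
  rw [Nat.mul_comm d N]
  omega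

theorem graph_integrand_rank_bound (d : ℕ) (hd : 1 ≤ d) {N : ℕ} (hN : 1 ≤ N)
    {E : Type*} [Fintype E] (hE : Nonempty E)
    (hm tm : E → Fin N) (hloop : ∀ e, hm e ≠ tm e)
    (t : E → ℝ) (ht : ∀ e, 0 < t e)
    (w : Fin N → Fin d → ℂ)
    (y : E → Fin d → ℂ)
    (hy : ∀ e k, y e k =
      ((1 / (2 * t e) : ℝ) : ℂ) * ∑ i, ((inc hm tm e i : ℝ) : ℂ) * (starRingEnd ℂ) (w i k))
    (L : ((Fin N → Fin d → ℂ) × (E → ℂ)) →ₗ[ℂ] (E → Fin d → ℂ))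
    (hL : ∀ (u : Fin N → Fin d → ℂ) (s : E → ℂ) (e : E) (k : Fin d),
      L (u, s) e k =
        ((1 / (2 * t e) : ℝ) : ℂ) * (∑ i, ((inc hm tm e i : ℝ) : ℂ) * u i k) -
          (s e / (t e : ℂ)) * y e k) :
    Module.finrank ℂ (LinearMap.range L) ≤ d * N + Fintype.card E - d - 1 :=
  graph_integrand_rank_bound_general d hE hm tm hloop t ht w y hy L hL
end
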